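/- arXiv:1807.02548 — 2 statements merged into one kernel-verified Lean document; each statement's English description precedes it below -/
import Mathlib

section
/- Let D > D' be consecutive delay levels of Ω with decrement points m = m(D) < m' = m(D'). Then for every integer M with m ≤ M ≤ m', the linear interpolation between (m, D) and (m', D') is a lower bound on Ω: D + (M − m)·(D' − D)/(m' − m) ≤ ⌈T/M⌉. Hence the piecewise linear approximation Ω̃ satisfies Ω̃(M) ≤ Ω(M), with equality at the decrement points. -/
/-- `D` is a delay level of the delay-cache capacity function `Ω(M) = ⌈T/M⌉`
if `D = ⌈T/M⌉` for some integer `1 ≤ M ≤ T`. -/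
def DelayLevel (T D : ℕ) : Prop :=
  ∃ M : ℕ, 1 ≤ M ∧ M ≤ T ∧ ⌈(T : ℚ) / (M : ℚ)⌉ = (D : ℤ)

/-- Let `D > D'` be consecutive delay levels of `Ω` with
decrement points `m = m(D) < m' = m(D')`. Then for every integer `M` with
`m ≤ M ≤ m'`, the linear interpolation between `(m, D)` and `(m', D')` is a
lower bound on `Ω`:
`D + (M - m) (D' - D)/(m' - m) ≤ ⌈T/M⌉`, with equality at the decrement
points. -/
theorem piecewise_linear_approx_le_omega
    (T D D' : ℕ) (hT : 0 < T)
    (hD : DelayLevel T D) (hD' : DelayLevel T D') (hlt : D' < D)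
    (hcons : ∀ E : ℕ, DelayLevel T E → ¬(D' < E ∧ E < D))
    (m m' : ℕ)
    (hm : IsLeast {M : ℕ | 0 < M ∧ ⌈(T : ℚ) / (M : ℚ)⌉ = (D : ℤ)} m)
    (hm' : IsLeast {M : ℕ | 0 < M ∧ ⌈(T : ℚ) / (M : ℚ)⌉ = (D' : ℤ)} m')
    (hmm : m < m') :
    ∀ M : ℕ, m ≤ M → M ≤ m' →
      (D : ℚ) + ((M : ℚ) - (m : ℚ)) * ((D' : ℚ) - (D : ℚ)) / ((m' : ℚ) - (m : ℚ))
        ≤ (⌈(T : ℚ) / (M : ℚ)⌉ : ℚ) := by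
  intro M hMm hMm'
  have hm'T : m' ≤ T := by
    obtain ⟨M0, hM01, hM0T, hM0⟩ := hD'
    exact le_trans (hm'.2 ⟨hM01, hM0⟩) hM0T
  have hmpos : 0 < m := hm.1.1
  have hMpos : 0 < M := lt_of_lt_of_le hmpos hMm
  have hmmq : (m : ℚ) < m' := by exact_mod_cast hmm
  rcases eq_or_lt_of_le hMm' with heq | hlt'
  · rw [heq, hm'.1.2]
    have hne : ((m' : ℚ) - m) ≠ 0 := by linarith
    have h := mul_div_cancel_left₀ ((D' : ℚ) - D) hne
    push_cast
    linarith [h]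
  · -- M < m'
    have hceilD' : (D' : ℤ) ≤ ⌈(T : ℚ) / M⌉ := by
      rw [← hm'.1.2]
      apply Int.ceil_le_ceil
      apply div_le_div_of_nonneg_left (by positivity)
        (by exact_mod_cast hMpos) (by exact_mod_cast hlt'.le)
    have hneD' : ⌈(T : ℚ) / M⌉ ≠ (D' : ℤ) := by
      intro h
      have : m' ≤ M := hm'.2 ⟨hMpos, h⟩
      omega
    have hposc : 0 < ⌈(T : ℚ) / M⌉ :=
      Int.ceil_pos.2 (div_pos (by exact_mod_cast hT) (by exact_mod_cast hMpos))
    set E := (⌈(T : ℚ) / M⌉).toNat with hE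
    have hEeq : ⌈(T : ℚ) / M⌉ = (E : ℤ) := (Int.toNat_of_nonneg hposc.le).symm
    have hDL : DelayLevel T E := ⟨M, hMpos, by omega, hEeq.symm ▸ hEeq⟩
    have hED : D ≤ E := by
      by_contra hc
      push_neg at hc
      have hE' : D' < E := by
        rw [hEeq] at hceilD' hneD'
        exact_mod_cast lt_of_le_of_ne hceilD' (by exact_mod_cast (Ne.symm hneD'))
      exact hcons E hDL ⟨hE', hc⟩
    have h2 : (D : ℚ) ≤ (⌈(T : ℚ) / M⌉ : ℚ) := by
      rw [hEeq]; exact_mod_cast hED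
    have h1 : ((M : ℚ) - m) * ((D' : ℚ) - D) / ((m' : ℚ) - m) ≤ 0 := by
      apply div_nonpos_of_nonpos_of_nonneg
      · apply mul_nonpos_of_nonneg_of_nonpos
        · have : (m : ℚ) ≤ M := by exact_mod_cast hMm
          linarith
        · have : (D' : ℚ) < D := by exact_mod_cast hlt
          linarith
      · linarith
    linarith
end

section
/- Let D > D' be consecutive delay levels of Ω. Then the gap between their decrement points satisfies m(D') − m(D) ≤ T/2. -/
lemma ceil_div_bounds (T M : ℕ) (D : ℤ) (hM : 0 < M)
    (h : ⌈(T : ℚ) / (M : ℚ)⌉ = D) :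
    (T : ℚ) ≤ (D : ℚ) * M ∧ ((D : ℚ) - 1) * M < T := by
  rw [Int.ceil_eq_iff] at h
  have hM' : (0 : ℚ) < M := by exact_mod_cast hM
  constructor
  · have h2 := h.2
    rw [div_le_iff₀ hM'] at h2
    exact_mod_cast h2
  · have h1 := h.1
    rw [lt_div_iff₀ hM'] at h1
    nlinarith

lemma ceil_div_mono (T a b : ℕ) (ha : 0 < a) (hab : a ≤ b) :
    ⌈(T : ℚ) / (b : ℚ)⌉ ≤ ⌈(T : ℚ) / (a : ℚ)⌉ := by
  have ha' : (0:ℚ) < a := by exact_mod_cast ha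
  apply Int.ceil_le_ceil
  have hab' : (a:ℚ) ≤ b := by exact_mod_cast hab
  gcongr

/-- Let `D > D'` be consecutive delay levels of `Ω`. Then the
gap between their decrement points satisfies `m(D') - m(D) ≤ T/2`. -/
theorem decrement_point_gap_le_half
    (T D D' : ℕ) (hT : 0 < T)
    (hD : DelayLevel T D) (hD' : DelayLevel T D') (hlt : D' < D)
    (hcons : ∀ E : ℕ, DelayLevel T E → ¬(D' < E ∧ E < D))
    (m m' : ℕ)
    (hm : IsLeast {M : ℕ | 0 < M ∧ ⌈(T : ℚ) / (M : ℚ)⌉ = (D : ℤ)} m)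
    (hm' : IsLeast {M : ℕ | 0 < M ∧ ⌈(T : ℚ) / (M : ℚ)⌉ = (D' : ℤ)} m') :
    (m' : ℚ) - (m : ℚ) ≤ (T : ℚ) / 2 := by
  obtain ⟨⟨hmpos, hmceil⟩, hmlb⟩ := hm
  obtain ⟨⟨hm'pos, hm'ceil⟩, hm'lb⟩ := hm'
  -- D' ≥ 1
  have hD'pos : 1 ≤ D' := by
    have : (0:ℤ) < ⌈(T : ℚ) / (m' : ℚ)⌉ := by
      rw [Int.ceil_pos]
      positivity
    rw [hm'ceil] at this
    exact_mod_cast this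
  have hD2 : 2 ≤ D := by omega
  -- m < m'
  have hmm' : m < m' := by
    by_contra hc
    push_neg at hc
    have := ceil_div_mono T m' m hm'pos hc
    rw [hmceil, hm'ceil] at this
    have : D ≤ D' := by exact_mod_cast this
    omega
  -- m' ≤ T
  have hm'T : m' ≤ T := by
    obtain ⟨M, hM1, hMT, hMceil⟩ := hD'
    exact le_trans (hm'lb ⟨hM1, hMceil⟩) hMT
  -- Ω(m'-1) = D
  have hk1 : 1 ≤ m' - 1 := by omega
  have hkceil : ⌈(T : ℚ) / ((m' - 1 : ℕ) : ℚ)⌉ = (D : ℤ) := by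
    set k := m' - 1 with hkdef
    set E := ⌈(T : ℚ) / (k : ℚ)⌉ with hEdef
    have hEpos : 0 < E := by
      rw [hEdef, Int.ceil_pos]
      have : (0:ℚ) < k := by exact_mod_cast hk1
      positivity
    set e := E.toNat with hedef
    have heE : (e : ℤ) = E := Int.toNat_of_nonneg (le_of_lt hEpos)
    have heceil : ⌈(T : ℚ) / (k : ℚ)⌉ = (e : ℤ) := by rw [heE]
    have hdl : DelayLevel T e := ⟨k, hk1, by omega, heceil⟩
    have heD' : (D' : ℤ) ≤ (e : ℤ) := by
      rw [← hm'ceil, ← heceil]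
      exact ceil_div_mono T k m' hk1 (by omega)
    have hne : e ≠ D' := by
      intro heq
      have : m' ≤ k := hm'lb ⟨hk1, by rw [heceil, heq]⟩
      omega
    have hD'e : D' < e := by
      have : D' ≤ e := by exact_mod_cast heD'
      omega
    have heD : (e : ℤ) ≤ (D : ℤ) := by
      rw [← hmceil, ← heceil]
      exact ceil_div_mono T m k hmpos (by omega)
    have heD2 : e ≤ D := by exact_mod_cast heD
    have : ¬(D' < e ∧ e < D) := hcons e hdl
    have heq : e = D := by omega
    rw [← heE, heq]
  -- numeric bounds
  obtain ⟨hq1, _⟩ := ceil_div_bounds T m (D : ℤ) hmpos hmceil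
  obtain ⟨_, hq2⟩ := ceil_div_bounds T (m' - 1) (D : ℤ) (by omega) hkceil
  push_cast at hq1 hq2
  have hk1' : ((m' : ℚ) - 1) = ((m' - 1 : ℕ) : ℚ) := by
    push_cast [Nat.cast_sub (by omega : 1 ≤ m')]
    ring
  rw [← hk1'] at hq2
  -- D ≤ T
  have hDT : D ≤ T := by
    have hDceilT : ⌈(T : ℚ) / ((1:ℕ) : ℚ)⌉ = (T : ℤ) := by
      norm_num
    have := ceil_div_mono T 1 m one_pos hmpos
    rw [hmceil, hDceilT] at this
    exact_mod_cast this
  by_cases hD3 : 3 ≤ D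
  · -- general case
    have hd : (3:ℚ) ≤ (D:ℚ) := by exact_mod_cast hD3
    have hTd : (D:ℚ) ≤ (T:ℚ) := by exact_mod_cast hDT
    nlinarith [mul_pos (sub_pos.mpr (by linarith : (1:ℚ) < (D:ℚ))) (by linarith : (0:ℚ) < (D:ℚ)),
      mul_le_mul_of_nonneg_left hq1 (by linarith : (0:ℚ) ≤ (D:ℚ) - 1),
      mul_lt_mul_of_pos_left hq2 (by linarith : (0:ℚ) < (D:ℚ)),
      mul_nonneg (mul_nonneg (by linarith : (0:ℚ) ≤ (T:ℚ) - 2) (by linarith : (0:ℚ) ≤ (D:ℚ) - 3)) (by linarith : (0:ℚ) ≤ (D:ℚ) + 2)]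
  · -- D = 2, D' = 1
    have hDeq : D = 2 := by omega
    have hD'eq : D' = 1 := by omega
    -- m' = T : T ≤ m' from ceil = 1
    have hTm' : (T:ℚ) ≤ (m':ℚ) := by
      obtain ⟨h1, _⟩ := ceil_div_bounds T m' (D' : ℤ) hm'pos hm'ceil
      rw [hD'eq] at h1
      push_cast at h1
      linarith
    have hm'T' : (m':ℚ) ≤ (T:ℚ) := by exact_mod_cast hm'T
    rw [hDeq] at hq1
    push_cast at hq1
    linarith
end
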